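/- arXiv:2205.12967 — 4 statements merged into one kernel-verified Lean document; each statement's English description precedes it below -/
import Mathlib

section
/- Let ξ be a real number with 0 < ξ < 1/log 2, set a := log(e^{1/ξ} − 1) (so a > 0), and set n_* := p·(1 − e^{−1/ξ})^{−1}. Then for every natural number p ≥ 1 and every natural number n₀ with p ≤ n₀ and n₀ < n_*, the sum S_{p,n₀} := ∑_{n=n₀}^{∞} C(n, p) e^{−n/ξ} satisfies S_{p,n₀} ≤ 10.8 · p · e^{−a p}. -/
/-- For `0 < ξ < 1/log 2`, `a := log(e^{1/ξ} - 1)`, `n_* := p (1 - e^{-1/ξ})⁻¹`,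
`p ≥ 1`, `p ≤ n₀` and `n₀ < n_*`, the sum `S_{p,n₀} = ∑_{n=n₀}^∞ C(n,p) e^{-n/ξ}`
is at most `10.8 · p · e^{-a p}`. -/
theorem S_bound_small_n₀ (ξ : ℝ) (hξ0 : 0 < ξ) (hξ : ξ < 1 / Real.log 2)
    (p n₀ : ℕ) (hp : 1 ≤ p) (hpn : p ≤ n₀)
    (hn₀ : (n₀ : ℝ) < p * (1 - Real.exp (-1 / ξ))⁻¹) :
    ∑' n : {n : ℕ // n₀ ≤ n}, (n.1.choose p : ℝ) * Real.exp (-(n.1 : ℝ) / ξ) ≤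
      10.8 * p * Real.exp (-Real.log (Real.exp (1 / ξ) - 1) * p) := by
  set q : ℝ := Real.exp (-1 / ξ) with hq_def
  have hq0 : 0 < q := Real.exp_pos _
  have hlog2 : Real.log 2 < 1 / ξ := by
    have := one_div_lt_one_div_of_lt hξ0 hξ
    rwa [one_div_one_div] at this
  have hqhalf : q < 1 / 2 := by
    have : q < Real.exp (-Real.log 2) := by
      apply Real.exp_lt_exp.2
      rw [neg_div]
      linarith
    rwa [Real.exp_neg, Real.exp_log (by norm_num : (0:ℝ) < 2), ← one_div] at this
  have hq1 : q < 1 := by linarith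
  -- f n = C(n,p) q^n
  set f : ℕ → ℝ := fun n => (n.choose p : ℝ) * q ^ n with hf_def
  have hexp_eq : ∀ n : ℕ, Real.exp (-(n : ℝ) / ξ) = q ^ n := by
    intro n
    rw [hq_def, ← Real.exp_nat_mul]
    congr 1
    field_simp
  have hf_nonneg : ∀ n, 0 ≤ f n := fun n =>
    mul_nonneg (Nat.cast_nonneg _) (pow_nonneg hq0.le _)
  have hqnorm : ‖q‖ < 1 := by rwa [Real.norm_eq_abs, abs_of_pos hq0]
  -- the shifted sum
  have hshift : HasSum (fun n : ℕ => ((n + p).choose p : ℝ) * q ^ n)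
      (1 / (1 - q) ^ (p + 1)) := hasSum_choose_mul_geometric_of_norm_lt_one p hqnorm
  have hshift' : HasSum (fun n : ℕ => f (n + p)) (q ^ p * (1 / (1 - q) ^ (p + 1))) := by
    have := hshift.mul_left (q ^ p)
    convert this using 2 with n
    show ((n + p).choose p : ℝ) * q ^ (n + p) = _
    rw [pow_add]
    ring
    rfl
  have hsummable : Summable f := by
    have := hshift'.summable
    exact (summable_nat_add_iff p).mp this
  have htsum_f : ∑' n, f n = q ^ p * (1 / (1 - q) ^ (p + 1)) := by
    rw [← Summable.sum_add_tsum_nat_add p hsummable, hshift'.tsum_eq]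
    have : ∀ i ∈ Finset.range p, f i = 0 := by
      intro i hi
      simp only [hf_def]
      rw [Nat.choose_eq_zero_of_lt (Finset.mem_range.1 hi)]
      simp
    rw [Finset.sum_eq_zero this, zero_add]
  -- tsum over subtype ≤ tsum over ℕ
  have hsub : ∑' n : {n : ℕ // n₀ ≤ n}, f n.1 ≤ ∑' n, f n :=
    (hsummable.subtype _).tsum_le_tsum_of_inj (Subtype.val) Subtype.val_injective
      (fun n _ => hf_nonneg n) (fun n => le_rfl) hsummable
  have hstep : ∑' n : {n : ℕ // n₀ ≤ n}, (n.1.choose p : ℝ) * Real.exp (-(n.1 : ℝ) / ξ)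
      = ∑' n : {n : ℕ // n₀ ≤ n}, f n.1 := by
    congr 1; funext n; rw [hexp_eq]
  -- rewrite the RHS exponential
  have hE1 : (1:ℝ) < Real.exp (1 / ξ) := by
    rw [show (1:ℝ) = Real.exp 0 by simp]
    exact Real.exp_lt_exp.2 (by positivity)
  have hEpos : 0 < Real.exp (1 / ξ) - 1 := by linarith
  have hexp_a : Real.exp (-Real.log (Real.exp (1 / ξ) - 1) * p) = (q / (1 - q)) ^ p := by
    have hqE : q = (Real.exp (1 / ξ))⁻¹ := by
      rw [hq_def, ← Real.exp_neg, neg_div]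
    have h1 : q / (1 - q) = (Real.exp (1 / ξ) - 1)⁻¹ := by
      have h1q : 1 - q ≠ 0 := by linarith
      have hE0 : Real.exp (1 / ξ) ≠ 0 := (Real.exp_pos _).ne'
      have hqE' : q * Real.exp (1 / ξ) = 1 := by
        rw [hqE, inv_mul_cancel₀ hE0]
      rw [div_eq_iff (by linarith : (1:ℝ) - q ≠ 0), eq_comm,
        inv_mul_eq_div, div_eq_iff hEpos.ne']
      nlinarith [hqE']
    have h2 : -Real.log (Real.exp (1 / ξ) - 1) * p
        = (p : ℕ) * Real.log ((Real.exp (1 / ξ) - 1)⁻¹) := by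
      rw [Real.log_inv]; ring
    rw [h1, h2, Real.exp_nat_mul, Real.exp_log (by positivity)]
  -- main estimate
  rw [hstep]
  calc ∑' n : {n : ℕ // n₀ ≤ n}, f n.1 ≤ q ^ p * (1 / (1 - q) ^ (p + 1)) := by
        rw [← htsum_f]; exact hsub
    _ = (q / (1 - q)) ^ p * (1 / (1 - q)) := by
        rw [div_pow, pow_succ]
        field_simp
    _ ≤ (q / (1 - q)) ^ p * 2 := by
        apply mul_le_mul_of_nonneg_left _ (pow_nonneg (div_nonneg hq0.le (by linarith)) p)
        rw [div_le_iff₀ (by linarith)]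
        linarith
    _ ≤ 10.8 * p * Real.exp (-Real.log (Real.exp (1 / ξ) - 1) * p) := by
        rw [hexp_a]
        have hp1 : (1:ℝ) ≤ p := by exact_mod_cast hp
        nlinarith [pow_nonneg (div_nonneg hq0.le (by linarith : (0:ℝ) ≤ 1 - q)) p]
end

section
/- Let ξ be a real number with 0 < ξ < 1/log 2, and set n_* := p·(1 − e^{−1/ξ})^{−1}. Then for every natural number p ≥ 1 and every natural number n₀ with n₀ ≥ n_*, the sum S_{p,n₀} := ∑_{n=n₀}^{∞} C(n, p) e^{−n/ξ} satisfies S_{p,n₀} ≤ 10.8 · (n₀^{p+1} · √p / p!) · e^{−n₀/ξ}. -/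
lemma choose_ratio_nat (n p : ℕ) (h : p ≤ n) :
    (n + 1 - p) * (n + 1).choose p = (n + 1) * n.choose p := by
  have h1 : (n + 1) * n.choose p = (n + 1) * n.choose (n - p) := by
    rw [Nat.choose_symm h]
  rw [h1]
  have h2 := Nat.add_one_mul_choose_eq n (n - p)
  have h3 : n - p + 1 = n + 1 - p := by omega
  rw [h2, h3]
  have h4 : (n + 1).choose (n + 1 - p) = (n + 1).choose p :=
    Nat.choose_symm (by omega)
  rw [h4, Nat.mul_comm]

set_option maxHeartbeats 1600000 in
/-- For `0 < ξ < 1/log 2`, `n_* := p (1 - e^{-1/ξ})⁻¹`, `p ≥ 1` and `n₀ ≥ n_*`,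
the sum `S_{p,n₀} = ∑_{n=n₀}^∞ C(n,p) e^{-n/ξ}` is at most
`10.8 · (n₀^{p+1} √p / p!) · e^{-n₀/ξ}`. -/
theorem S_bound_large_n₀ (ξ : ℝ) (hξ0 : 0 < ξ) (hξ : ξ < 1 / Real.log 2)
    (p n₀ : ℕ) (hp : 1 ≤ p)
    (hn₀ : p * (1 - Real.exp (-1 / ξ))⁻¹ ≤ (n₀ : ℝ)) :
    ∑' n : {n : ℕ // n₀ ≤ n}, (n.1.choose p : ℝ) * Real.exp (-(n.1 : ℝ) / ξ) ≤
      10.8 * ((n₀ : ℝ) ^ (p + 1) * Real.sqrt p / (p.factorial : ℝ)) * Real.exp (-(n₀ : ℝ) / ξ) := by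
  have hlog2 : 0 < Real.log 2 := Real.log_pos (by norm_num)
  set r := Real.exp (-1 / ξ) with hrdef
  have hr0 : 0 < r := Real.exp_pos _
  have hrhalf : r < 1 / 2 := by
    have hx : Real.log 2 < 1 / ξ := by
      rw [lt_div_iff₀ hξ0]
      have := (lt_div_iff₀ hlog2).mp hξ
      linarith
    have : r < Real.exp (-Real.log 2) := by
      apply Real.exp_lt_exp.2; rw [neg_div]; linarith
    rwa [Real.exp_neg, Real.exp_log (by norm_num : (0:ℝ) < 2), ← one_div] at this
  have hr1 : r < 1 := by linarith
  have h1r : (0:ℝ) < 1 - r := by linarith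
  -- rewrite exponentials as powers of r
  have hexp : ∀ n : ℕ, Real.exp (-(n : ℝ) / ξ) = r ^ n := by
    intro n
    rw [hrdef, ← Real.exp_nat_mul]
    congr 1; ring
  -- basic consequences of hn₀
  have key1 : (p : ℝ) ≤ n₀ * (1 - r) := by
    rw [← div_le_iff₀ h1r]
    rwa [div_eq_mul_inv]
  have hpn : (p : ℝ) < n₀ := by
    have hn0pos : (0:ℝ) < n₀ := by
      have : (1:ℝ) ≤ p := by exact_mod_cast hp
      nlinarith
    nlinarith
  have hpn' : p < n₀ := by exact_mod_cast hpn
  have hd : (0:ℝ) < (n₀ : ℝ) + 1 - p := by linarith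
  set q : ℝ := r * ((n₀ : ℝ) + 1) / ((n₀ : ℝ) + 1 - p) with hqdef
  have hq0 : 0 ≤ q := by
    apply div_nonneg (by positivity) hd.le
  have hA : (p : ℝ) + (1 - r) ≤ ((n₀ : ℝ) + 1) * (1 - r) := by nlinarith
  have hq1 : q < 1 := by
    rw [hqdef, div_lt_one hd]
    nlinarith
  -- the term and step bound
  set t : ℕ → ℝ := fun n => (n.choose p : ℝ) * r ^ n with htdef
  have ht0 : ∀ n, 0 ≤ t n := fun n => by positivity
  have hstep : ∀ n, n₀ ≤ n → t (n + 1) ≤ q * t n := by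
    intro n hn
    have hpn2 : p ≤ n := le_of_lt (lt_of_lt_of_le hpn' hn)
    have hid : ((n : ℝ) + 1 - p) * (((n + 1).choose p : ℕ) : ℝ)
        = ((n : ℝ) + 1) * ((n.choose p : ℕ) : ℝ) := by
      have := choose_ratio_nat n p hpn2
      have hcast : ((n + 1 - p : ℕ) : ℝ) = (n : ℝ) + 1 - p := by
        push_cast [Nat.cast_sub (by omega : p ≤ n + 1)]; ring
      calc ((n : ℝ) + 1 - p) * (((n + 1).choose p : ℕ) : ℝ)
          = ((n + 1 - p : ℕ) : ℝ) * (((n + 1).choose p : ℕ) : ℝ) := by rw [hcast]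
        _ = (((n + 1 - p) * (n + 1).choose p : ℕ) : ℝ) := by push_cast; ring
        _ = (((n + 1) * n.choose p : ℕ) : ℝ) := by rw [this]
        _ = ((n : ℝ) + 1) * ((n.choose p : ℕ) : ℝ) := by push_cast; ring
    have hdn : (0:ℝ) < (n : ℝ) + 1 - p := by
      have : (n₀ : ℝ) ≤ n := by exact_mod_cast hn
      linarith
    -- key: C(n+1,p) * (n₀+1-p) ≤ (n₀+1) * C(n,p)
    have hmain : (((n + 1).choose p : ℕ) : ℝ) * ((n₀ : ℝ) + 1 - p)
        ≤ ((n₀ : ℝ) + 1) * ((n.choose p : ℕ) : ℝ) := by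
      have hnn : (n₀ : ℝ) ≤ n := by exact_mod_cast hn
      have ha : (0:ℝ) ≤ ((n.choose p : ℕ) : ℝ) := by positivity
      have hb : (0:ℝ) ≤ (((n + 1).choose p : ℕ) : ℝ) := by positivity
      have hppos : (0:ℝ) < p := by exact_mod_cast hp
      nlinarith [mul_nonneg hb (sub_nonneg.2 hnn)]
    have hterm : (((n + 1).choose p : ℕ) : ℝ) * r ≤ q * ((n.choose p : ℕ) : ℝ) := by
      rw [hqdef]
      rw [div_mul_eq_mul_div, le_div_iff₀ hd]
      nlinarith
    calc t (n + 1) = ((((n + 1)).choose p : ℕ) : ℝ) * r * r ^ n := by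
          simp only [htdef]; rw [pow_succ]; ring
      _ ≤ q * ((n.choose p : ℕ) : ℝ) * r ^ n := by
          apply mul_le_mul_of_nonneg_right hterm (by positivity)
      _ = q * t n := by simp only [htdef]; ring
  have hgeom : ∀ k, t (n₀ + k) ≤ t n₀ * q ^ k := by
    intro k
    induction k with
    | zero => simp
    | succ k ih =>
        have := hstep (n₀ + k) (Nat.le_add_right _ _)
        calc t (n₀ + (k + 1)) = t (n₀ + k + 1) := by ring_nf
          _ ≤ q * t (n₀ + k) := this
          _ ≤ q * (t n₀ * q ^ k) := by
              apply mul_le_mul_of_nonneg_left ih hq0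
          _ = t n₀ * q ^ (k + 1) := by ring
  -- summability
  have hsg : Summable (fun k : ℕ => t n₀ * q ^ k) :=
    (summable_geometric_of_lt_one hq0 hq1).mul_left _
  have hsf : Summable (fun k : ℕ => t (n₀ + k)) :=
    Summable.of_nonneg_of_le (fun k => ht0 _) (fun k => hgeom k) hsg
  -- equiv between ℕ and the subtype
  let e : ℕ ≃ {n : ℕ // n₀ ≤ n} :=
    { toFun := fun k => ⟨n₀ + k, Nat.le_add_right _ _⟩
      invFun := fun n => n.1 - n₀
      left_inv := fun k => by simp
      right_inv := fun n => by
        ext; simp [Nat.add_sub_cancel' n.2] }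
  have hrw : (∑' n : {n : ℕ // n₀ ≤ n}, (n.1.choose p : ℝ) * Real.exp (-(n.1 : ℝ) / ξ))
      = ∑' k : ℕ, t (n₀ + k) := by
    rw [← e.tsum_eq]
    congr 1
    funext k
    simp only [htdef, e, Equiv.coe_fn_mk]
    rw [hexp]
  rw [hrw, hexp]
  have hsum : (∑' k : ℕ, t (n₀ + k)) ≤ t n₀ * (1 - q)⁻¹ := by
    calc (∑' k : ℕ, t (n₀ + k)) ≤ ∑' k : ℕ, t n₀ * q ^ k :=
          Summable.tsum_le_tsum (fun k => hgeom k) hsf hsg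
      _ = t n₀ * ∑' k : ℕ, q ^ k := tsum_mul_left
      _ = t n₀ * (1 - q)⁻¹ := by rw [tsum_geometric_of_lt_one hq0 hq1]
  refine hsum.trans ?_
  -- final arithmetic
  have hqlt : (0:ℝ) < 1 - q := by linarith
  have hinvq : (1 - q)⁻¹ ≤ 2 * ((n₀ : ℝ) + 1 - p) := by
    have h1 : 1 - q = (((n₀ : ℝ) + 1) * (1 - r) - p) / ((n₀ : ℝ) + 1 - p) := by
      rw [hqdef]; field_simp; ring
    have hApos : (1 - r) ≤ ((n₀ : ℝ) + 1) * (1 - r) - p := by nlinarith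
    rw [inv_le_iff_one_le_mul₀ hqlt, h1]
    have heq : 2 * ((n₀ : ℝ) + 1 - p) * ((((n₀ : ℝ) + 1) * (1 - r) - p) / ((n₀ : ℝ) + 1 - p))
        = 2 * (((n₀ : ℝ) + 1) * (1 - r) - p) := by field_simp
    rw [heq]; linarith
  have hchoose : ((n₀.choose p : ℕ) : ℝ) ≤ (n₀ : ℝ) ^ p / (p.factorial : ℝ) :=
    Nat.choose_le_pow_div p n₀
  have hsqrt : (1:ℝ) ≤ Real.sqrt p := by
    rw [show (1:ℝ) = Real.sqrt 1 by simp]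
    exact Real.sqrt_le_sqrt (by exact_mod_cast hp)
  have hfac : (0:ℝ) < (p.factorial : ℝ) := by exact_mod_cast p.factorial_pos
  have hrn : (0:ℝ) < r ^ n₀ := by positivity
  have ht0' : (0:ℝ) ≤ t n₀ := ht0 n₀
  have hbound1 : t n₀ * (1 - q)⁻¹ ≤ ((n₀ : ℝ) ^ p / (p.factorial : ℝ)) * r ^ n₀ * (2 * (n₀ : ℝ)) := by
    have h2 : (1 - q)⁻¹ ≤ 2 * (n₀ : ℝ) := by
      have : (1:ℝ) ≤ p := by exact_mod_cast hp
      linarith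
    have h3 : t n₀ ≤ ((n₀ : ℝ) ^ p / (p.factorial : ℝ)) * r ^ n₀ :=
      mul_le_mul_of_nonneg_right hchoose hrn.le
    have h4 : (0:ℝ) ≤ (1 - q)⁻¹ := (inv_pos.2 hqlt).le
    calc t n₀ * (1 - q)⁻¹ ≤ (((n₀ : ℝ) ^ p / (p.factorial : ℝ)) * r ^ n₀) * (1 - q)⁻¹ :=
          mul_le_mul_of_nonneg_right h3 h4
      _ ≤ (((n₀ : ℝ) ^ p / (p.factorial : ℝ)) * r ^ n₀) * (2 * (n₀ : ℝ)) := by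
          apply mul_le_mul_of_nonneg_left h2 (by positivity)
  refine hbound1.trans ?_
  have hpow : (n₀ : ℝ) ^ p * (n₀ : ℝ) = (n₀ : ℝ) ^ (p + 1) := by rw [pow_succ]
  have hn0nn : (0:ℝ) ≤ (n₀ : ℝ) := Nat.cast_nonneg _
  have : ((n₀ : ℝ) ^ p / (p.factorial : ℝ)) * r ^ n₀ * (2 * (n₀ : ℝ))
      = 2 * ((n₀ : ℝ) ^ (p + 1) / (p.factorial : ℝ)) * r ^ n₀ := by
    rw [← hpow]; field_simp
  rw [this]
  have hfinal : 2 * ((n₀ : ℝ) ^ (p + 1) / (p.factorial : ℝ))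
      ≤ 10.8 * ((n₀ : ℝ) ^ (p + 1) * Real.sqrt p / (p.factorial : ℝ)) := by
    have hx : (0:ℝ) ≤ (n₀ : ℝ) ^ (p + 1) / (p.factorial : ℝ) := by positivity
    calc 2 * ((n₀ : ℝ) ^ (p + 1) / (p.factorial : ℝ))
        ≤ 10.8 * ((n₀ : ℝ) ^ (p + 1) / (p.factorial : ℝ)) := by nlinarith
      _ ≤ 10.8 * ((n₀ : ℝ) ^ (p + 1) * Real.sqrt p / (p.factorial : ℝ)) := by
          have : (n₀ : ℝ) ^ (p + 1) / (p.factorial : ℝ)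
              ≤ (n₀ : ℝ) ^ (p + 1) * Real.sqrt p / (p.factorial : ℝ) := by
            apply div_le_div_of_nonneg_right ?_ hfac.le
            · exact le_mul_of_one_le_right (pow_nonneg hn0nn _) hsqrt
          linarith
  exact mul_le_mul_of_nonneg_right hfinal hrn.le
end

section
/- Let N ≥ 1 and r_U ≥ 1 be integers, let ξ, q > 0 be reals with ξ < 1/log 2, and let V be a finite-dimensional complex inner product space. Suppose for each integer n with r_U < n ≤ N we are given at most N unitaries V_{n,1}, …, V_{n,m_n} on V (m_n ≤ N), each satisfying ‖I − V_{n,k}‖ ≤ √q · e^{−(n−1)/(2ξ)} in operator norm. Let U′ be the product of all these unitaries in any fixed order, let Ũ be any unitary on V, set U := U′Ũ, and let T be any operator on V with ‖T‖ ≤ 1. If √q · N · e^{−r_U/(2ξ)} ≤ (1 − e^{−1/(2ξ)})/8, then ‖U T U† − Ũ T Ũ†‖ ≤ 8·√q · N · e^{−r_U/(2ξ)}. -/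
private lemma aux_sum_flatMap {α β : Type*} (l : List α) (f : α → List β) (g : β → ℝ) :
    ((l.flatMap f).map g).sum = (l.map (fun a => ((f a).map g).sum)).sum := by
  induction l with
  | nil => simp
  | cons a t ih => simp [List.flatMap_cons, ih]

open ContinuousLinearMap in
private lemma aux_unitary_norm_le_one {E : Type*} [NormedAddCommGroup E]
    [InnerProductSpace ℂ E] [FiniteDimensional ℂ E]
    (A : E →L[ℂ] E) (h : ContinuousLinearMap.adjoint A * A = 1) : ‖A‖ ≤ 1 := by
  refine A.opNorm_le_bound zero_le_one fun x => ?_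
  rw [one_mul]
  have h1 : (inner ℂ (A x) (A x) : ℂ) = inner ℂ x x := by
    rw [← ContinuousLinearMap.adjoint_inner_left]
    have hx : (ContinuousLinearMap.adjoint A) (A x) = x := by
      have hx0 : (ContinuousLinearMap.adjoint A * A) x = (1 : E →L[ℂ] E) x := by rw [h]
      simpa using hx0
    rw [hx]
  have h2 : ‖A x‖ ^ 2 = ‖x‖ ^ 2 := by
    rw [inner_self_eq_norm_sq_to_K, inner_self_eq_norm_sq_to_K] at h1
    exact_mod_cast h1
  nlinarith [norm_nonneg (A x), norm_nonneg x]

private lemma aux_prod_norm_le_one {E : Type*} [NormedAddCommGroup E]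
    [InnerProductSpace ℂ E] [FiniteDimensional ℂ E]
    (l : List (E →L[ℂ] E)) (h : ∀ a ∈ l, ‖a‖ ≤ 1) : ‖l.prod‖ ≤ 1 := by
  induction l with
  | nil =>
    rw [List.prod_nil, ContinuousLinearMap.one_def]
    exact ContinuousLinearMap.norm_id_le
  | cons a t ih =>
    rw [List.prod_cons]
    calc ‖a * t.prod‖ ≤ ‖a‖ * ‖t.prod‖ := norm_mul_le _ _
    _ ≤ 1 * 1 := by
        have := ih fun b hb => h b (List.mem_cons_of_mem _ hb)
        exact mul_le_mul (h a (List.mem_cons_self)) this (norm_nonneg _) zero_le_one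
    _ = 1 := one_mul 1

private lemma aux_one_sub_prod {E : Type*} [NormedAddCommGroup E]
    [InnerProductSpace ℂ E] [FiniteDimensional ℂ E]
    (l : List (E →L[ℂ] E)) (h : ∀ a ∈ l, ‖a‖ ≤ 1) :
    ‖(1 : E →L[ℂ] E) - l.prod‖ ≤ (l.map (fun a => ‖(1 : E →L[ℂ] E) - a‖)).sum := by
  induction l with
  | nil => rw [List.prod_nil, sub_self, norm_zero, List.map_nil, List.sum_nil]
  | cons a t ih =>
    have ht := ih fun b hb => h b (List.mem_cons_of_mem _ hb)
    rw [List.prod_cons, List.map_cons, List.sum_cons]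
    have key : (1 : E →L[ℂ] E) - a * t.prod = (1 - a) + a * (1 - t.prod) := by
      noncomm_ring
    rw [key]
    calc ‖(1 - a) + a * (1 - t.prod)‖
        ≤ ‖(1 : E →L[ℂ] E) - a‖ + ‖a * (1 - t.prod)‖ := norm_add_le _ _
    _ ≤ ‖(1 : E →L[ℂ] E) - a‖ + ‖a‖ * ‖(1 : E →L[ℂ] E) - t.prod‖ := by
        gcongr; exact norm_mul_le _ _
    _ ≤ ‖(1 : E →L[ℂ] E) - a‖ + (t.map (fun a => ‖(1 : E →L[ℂ] E) - a‖)).sum := by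
        gcongr
        calc ‖a‖ * ‖(1 : E →L[ℂ] E) - t.prod‖
            ≤ 1 * (t.map (fun a => ‖(1 : E →L[ℂ] E) - a‖)).sum :=
              mul_le_mul (h a (List.mem_cons_self)) ht (norm_nonneg _) zero_le_one
        _ = _ := one_mul _

set_option maxHeartbeats 1000000 in
set_option synthInstance.maxHeartbeats 200000 in
/-- Closeness of exact and truncated local integrals of motion. With `U = U'Ũ`, where `U'`
is a product (in any fixed order) of unitaries `V_{n,k}` (for `r_U < n ≤ N`, at most `N`
unitaries for each `n`) each satisfying `‖I - V_{n,k}‖ ≤ √q e^{-(n-1)/(2ξ)}`, `Ũ` unitary,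
and `T` any operator with `‖T‖ ≤ 1`: if `√q N e^{-r_U/(2ξ)} ≤ (1 - e^{-1/(2ξ)})/8`, then
`‖U T U† - Ũ T Ũ†‖ ≤ 8 √q N e^{-r_U/(2ξ)}`. -/
theorem truncated_LIOM_close {E : Type*} [NormedAddCommGroup E]
    [InnerProductSpace ℂ E] [FiniteDimensional ℂ E]
    (N rU : ℕ) (hN : 1 ≤ N) (hrU : 1 ≤ rU)
    (ξ q : ℝ) (hξ0 : 0 < ξ) (hξ : ξ < 1 / Real.log 2) (hq : 0 < q)
    (m : ℕ → ℕ) (hm : ∀ n, rU < n → n ≤ N → m n ≤ N)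
    (V : ℕ → ℕ → (E →L[ℂ] E))
    (hVunitary : ∀ n, rU < n → n ≤ N → ∀ k, k < m n →
      ContinuousLinearMap.adjoint (V n k) * V n k = 1 ∧
      V n k * ContinuousLinearMap.adjoint (V n k) = 1)
    (hVnorm : ∀ n, rU < n → n ≤ N → ∀ k, k < m n →
      ‖(1 : E →L[ℂ] E) - V n k‖ ≤ Real.sqrt q * Real.exp (-((n : ℝ) - 1) / (2 * ξ)))
    (L : List (E →L[ℂ] E))
    (hL : L.Perm (((Finset.Ioc rU N).sort (· ≤ ·)).flatMap fun n => (List.range (m n)).map (V n)))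
    (Ut : E →L[ℂ] E)
    (hUt : ContinuousLinearMap.adjoint Ut * Ut = 1 ∧ Ut * ContinuousLinearMap.adjoint Ut = 1)
    (T : E →L[ℂ] E) (hT : ‖T‖ ≤ 1)
    (hsmall : Real.sqrt q * N * Real.exp (-(rU : ℝ) / (2 * ξ)) ≤
      (1 - Real.exp (-1 / (2 * ξ))) / 8) :
    ‖L.prod * Ut * T * ContinuousLinearMap.adjoint (L.prod * Ut) -
        Ut * T * ContinuousLinearMap.adjoint Ut‖ ≤
      8 * Real.sqrt q * N * Real.exp (-(rU : ℝ) / (2 * ξ)) := by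
  classical
  set ρ : ℝ := Real.exp (-1 / (2 * ξ)) with hρdef
  have hρ0 : 0 < ρ := Real.exp_pos _
  have hρ1 : ρ < 1 := by
    apply Real.exp_lt_one_iff.mpr
    exact div_neg_of_neg_of_pos (by norm_num) (by linarith)
  -- ρ ≤ 3/4
  have hlog2 : (0:ℝ) < Real.log 2 := Real.log_pos (by norm_num)
  have hξ2 : Real.log 2 / 2 < 1 / (2 * ξ) := by
    rw [div_lt_div_iff₀ (by norm_num) (by linarith)]
    have h1 : ξ * Real.log 2 < 1 := by
      have := (lt_div_iff₀ hlog2).mp hξ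
      linarith
    nlinarith
  have hρ34 : ρ ≤ 3 / 4 := by
    have h1 : ρ < Real.exp (-(Real.log 2 / 2)) := by
      rw [hρdef]
      apply Real.exp_lt_exp.mpr
      rw [neg_div]
      linarith
    have h2 : Real.exp (-(Real.log 2 / 2)) ^ 2 = 1 / 2 := by
      rw [← Real.exp_nat_mul, show ((2:ℕ):ℝ) * -(Real.log 2 / 2) = -Real.log 2 by push_cast; ring,
        Real.exp_neg, Real.exp_log (by norm_num : (0:ℝ) < 2)]
      norm_num
    nlinarith [Real.exp_pos (-(Real.log 2 / 2))]
  have hρpow : ∀ j : ℕ, ρ ^ j = Real.exp (-(j : ℝ) / (2 * ξ)) := by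
    intro j
    rw [hρdef, ← Real.exp_nat_mul]
    congr 1
    field_simp
  -- every element of the list is such a V n k
  set FL := (((Finset.Ioc rU N).sort (· ≤ ·)).flatMap fun n => (List.range (m n)).map (V n))
    with hFL
  have hmem : ∀ a ∈ FL, ∃ n k, rU < n ∧ n ≤ N ∧ k < m n ∧ a = V n k := by
    intro a ha
    rw [hFL, List.mem_flatMap] at ha
    obtain ⟨n, hn, ha⟩ := ha
    rw [Finset.mem_sort, Finset.mem_Ioc] at hn
    rw [List.mem_map] at ha
    obtain ⟨k, hk, rfl⟩ := ha
    rw [List.mem_range] at hk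
    exact ⟨n, k, hn.1, hn.2, hk, rfl⟩
  have hLnorm1 : ∀ a ∈ L, ‖a‖ ≤ 1 := by
    intro a ha
    obtain ⟨n, k, h1, h2, h3, rfl⟩ := hmem a (hL.mem_iff.mp ha)
    exact aux_unitary_norm_le_one _ (hVunitary n h1 h2 k h3).1
  have hq' : 0 ≤ Real.sqrt q := Real.sqrt_nonneg q
  -- sum bound
  set S := (L.map (fun a => ‖(1 : E →L[ℂ] E) - a‖)).sum with hS
  have hSbound : S ≤ Real.sqrt q * N * (ρ ^ rU / (1 - ρ)) := by
    have hperm : S = (FL.map (fun a => ‖(1 : E →L[ℂ] E) - a‖)).sum := (hL.map _).sum_eq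
    have hsort : (((Finset.Ioc rU N).sort (· ≤ ·)).map fun n =>
          (((List.range (m n)).map (V n)).map fun a => ‖(1 : E →L[ℂ] E) - a‖).sum).Perm
        ((Finset.Ioc rU N).toList.map fun n =>
          (((List.range (m n)).map (V n)).map fun a => ‖(1 : E →L[ℂ] E) - a‖).sum) :=
      (Finset.sort_perm_toList _ _).map _
    rw [hperm, hFL, aux_sum_flatMap, hsort.sum_eq, Finset.sum_map_toList]
    have step1 : ∑ n ∈ Finset.Ioc rU N,
        (((List.range (m n)).map (V n)).map fun a => ‖(1 : E →L[ℂ] E) - a‖).sum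
        ≤ ∑ n ∈ Finset.Ioc rU N, (Real.sqrt q * N) * ρ ^ (n - 1) := by
      apply Finset.sum_le_sum
      intro n hn
      rw [Finset.mem_Ioc] at hn
      rw [List.map_map]
      have hone : 1 ≤ n := le_trans hrU (le_of_lt hn.1)
      have hcast : ((n - 1 : ℕ) : ℝ) = (n : ℝ) - 1 := by
        push_cast [hone]; ring
      have hterm : ∀ x ∈ (List.range (m n)).map
          ((fun a => ‖(1 : E →L[ℂ] E) - a‖) ∘ V n), x ≤ Real.sqrt q * ρ ^ (n - 1) := by
        intro x hx
        rw [List.mem_map] at hx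
        obtain ⟨k, hk, rfl⟩ := hx
        rw [List.mem_range] at hk
        simp only [Function.comp_apply]
        rw [hρpow (n - 1), hcast]
        exact hVnorm n hn.1 hn.2 k hk
      calc ((List.range (m n)).map ((fun a => ‖(1 : E →L[ℂ] E) - a‖) ∘ V n)).sum
          ≤ ((List.range (m n)).map ((fun a => ‖(1 : E →L[ℂ] E) - a‖) ∘ V n)).length •
            (Real.sqrt q * ρ ^ (n - 1)) := List.sum_le_card_nsmul _ _ hterm
      _ = (m n : ℝ) * (Real.sqrt q * ρ ^ (n - 1)) := by
          rw [List.length_map, List.length_range, nsmul_eq_mul]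
      _ ≤ (N : ℝ) * (Real.sqrt q * ρ ^ (n - 1)) := by
          have : (m n : ℝ) ≤ (N : ℝ) := Nat.cast_le.mpr (hm n hn.1 hn.2)
          apply mul_le_mul_of_nonneg_right this
          positivity
      _ = (Real.sqrt q * N) * ρ ^ (n - 1) := by ring
    refine le_trans step1 ?_
    rw [← Finset.mul_sum]
    have hgeom : ∑ n ∈ Finset.Ioc rU N, ρ ^ (n - 1) ≤ ρ ^ rU / (1 - ρ) := by
      have hre : ∑ n ∈ Finset.Ioc rU N, ρ ^ (n - 1) = ∑ j ∈ Finset.Ico rU N, ρ ^ j := by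
        apply Finset.sum_nbij' (fun n => n - 1) (fun j => j + 1)
        · intro a ha
          rw [Finset.mem_Ioc] at ha
          rw [Finset.mem_Ico]
          omega
        · intro a ha
          rw [Finset.mem_Ico] at ha
          rw [Finset.mem_Ioc]
          omega
        · intro a ha
          rw [Finset.mem_Ioc] at ha
          omega
        · intro a ha
          omega
        · intro a _
          rfl
      rw [hre]
      exact geom_sum_Ico_le_of_lt_one (le_of_lt hρ0) hρ1
    exact mul_le_mul_of_nonneg_left hgeom (by positivity)
  -- operator algebra
  set P := L.prod with hP
  have hPnorm : ‖P‖ ≤ 1 := aux_prod_norm_le_one L hLnorm1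
  have hPsub : ‖(1 : E →L[ℂ] E) - P‖ ≤ S := aux_one_sub_prod L hLnorm1
  have hadjnorm : ∀ A : E →L[ℂ] E, ‖ContinuousLinearMap.adjoint A‖ = ‖A‖ := fun A =>
    (ContinuousLinearMap.adjoint : (E →L[ℂ] E) ≃ₗᵢ⋆[ℂ] (E →L[ℂ] E)).norm_map A
  have hadj1 : ContinuousLinearMap.adjoint (1 : E →L[ℂ] E) = 1 := by
    rw [← ContinuousLinearMap.star_eq_adjoint, star_one]
  have hPadjnorm : ‖ContinuousLinearMap.adjoint P‖ ≤ 1 := by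
    rw [hadjnorm]
    exact hPnorm
  have hPadjsub : ‖ContinuousLinearMap.adjoint P - 1‖ ≤ S := by
    have heq : ContinuousLinearMap.adjoint P - 1 =
        ContinuousLinearMap.adjoint (P - 1) := by
      rw [map_sub, hadj1]
    rw [heq, hadjnorm, norm_sub_rev]
    exact hPsub
  have hUtnorm : ‖Ut‖ ≤ 1 := aux_unitary_norm_le_one Ut hUt.1
  have hUtadjnorm : ‖ContinuousLinearMap.adjoint Ut‖ ≤ 1 := by
    apply aux_unitary_norm_le_one
    rw [ContinuousLinearMap.adjoint_adjoint]
    exact hUt.2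
  set T' := Ut * T * ContinuousLinearMap.adjoint Ut with hT'def
  have hT' : ‖T'‖ ≤ 1 := by
    calc ‖Ut * T * ContinuousLinearMap.adjoint Ut‖
        ≤ ‖Ut * T‖ * ‖ContinuousLinearMap.adjoint Ut‖ := norm_mul_le _ _
    _ ≤ (‖Ut‖ * ‖T‖) * ‖ContinuousLinearMap.adjoint Ut‖ := by
        apply mul_le_mul_of_nonneg_right (norm_mul_le _ _) (norm_nonneg _)
    _ ≤ (1 * 1) * 1 := by
        apply mul_le_mul _ hUtadjnorm (norm_nonneg _) (by norm_num)
        exact mul_le_mul hUtnorm hT (norm_nonneg _) zero_le_one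
    _ = 1 := by norm_num
  have hadjmul : ContinuousLinearMap.adjoint (P * Ut) =
      ContinuousLinearMap.adjoint Ut * ContinuousLinearMap.adjoint P := by
    rw [← ContinuousLinearMap.star_eq_adjoint, star_mul,
      ContinuousLinearMap.star_eq_adjoint, ContinuousLinearMap.star_eq_adjoint]
  have hrw : P * Ut * T * ContinuousLinearMap.adjoint (P * Ut) -
      Ut * T * ContinuousLinearMap.adjoint Ut =
      (P - 1) * (T' * ContinuousLinearMap.adjoint P) +
        T' * (ContinuousLinearMap.adjoint P - 1) := by
    rw [hadjmul, hT'def]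
    noncomm_ring
  have hmain : ‖P * Ut * T * ContinuousLinearMap.adjoint (P * Ut) -
      Ut * T * ContinuousLinearMap.adjoint Ut‖ ≤ 2 * S := by
    rw [hrw]
    have h1 : ‖(P - 1) * (T' * ContinuousLinearMap.adjoint P)‖ ≤ S := by
      calc ‖(P - 1) * (T' * ContinuousLinearMap.adjoint P)‖
          ≤ ‖P - 1‖ * ‖T' * ContinuousLinearMap.adjoint P‖ := norm_mul_le _ _
      _ ≤ S * 1 := by
          apply mul_le_mul _ _ (norm_nonneg _) _
          · rw [norm_sub_rev]; exact hPsub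
          · calc ‖T' * ContinuousLinearMap.adjoint P‖
                ≤ ‖T'‖ * ‖ContinuousLinearMap.adjoint P‖ := norm_mul_le _ _
            _ ≤ 1 * 1 := mul_le_mul hT' hPadjnorm (norm_nonneg _) zero_le_one
            _ = 1 := one_mul 1
          · exact le_trans (norm_nonneg ((1 : E →L[ℂ] E) - P)) hPsub
      _ = S := mul_one S
    have h2 : ‖T' * (ContinuousLinearMap.adjoint P - 1)‖ ≤ S := by
      calc ‖T' * (ContinuousLinearMap.adjoint P - 1)‖
          ≤ ‖T'‖ * ‖ContinuousLinearMap.adjoint P - 1‖ := norm_mul_le _ _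
      _ ≤ 1 * S := mul_le_mul hT' hPadjsub (norm_nonneg _) zero_le_one
      _ = S := one_mul S
    calc ‖(P - 1) * (T' * ContinuousLinearMap.adjoint P) +
        T' * (ContinuousLinearMap.adjoint P - 1)‖
        ≤ ‖(P - 1) * (T' * ContinuousLinearMap.adjoint P)‖ +
          ‖T' * (ContinuousLinearMap.adjoint P - 1)‖ := norm_add_le _ _
    _ ≤ S + S := add_le_add h1 h2
    _ = 2 * S := by ring
  -- conclude
  have hexp : Real.exp (-(rU : ℝ) / (2 * ξ)) = ρ ^ rU := (hρpow rU).symm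
  rw [hexp] at hsmall ⊢
  have hfinal : 2 * S ≤ 8 * Real.sqrt q * N * ρ ^ rU := by
    have h14 : (1:ℝ)/4 ≤ 1 - ρ := by linarith
    have hx : 0 ≤ Real.sqrt q * N * ρ ^ rU := by positivity
    have : Real.sqrt q * N * (ρ ^ rU / (1 - ρ)) ≤ 4 * (Real.sqrt q * N * ρ ^ rU) := by
      rw [mul_div_assoc' (Real.sqrt q * N) _ _]
      rw [div_le_iff₀ (by linarith : (0:ℝ) < 1 - ρ)]
      nlinarith
    nlinarith
  exact le_trans hmain hfinal
end

section
/- Let ξ be a real number with 0 < ξ < 1/log 2, set κ := 1/ξ − log 2, a := log(e^{1/ξ} − 1), and k := min(κ, a). Then there exists a constant C > 0, depending only on ξ, such that for every integer r ≥ 2, ∑_{p=0}^{r−2} S_{p,r−1} + ∑_{p=r−1}^{∞} S_{p,p} ≤ C · r · e^{−k r}, where S_{p,n₀} := ∑_{n=n₀}^{∞} C(n, p) e^{−n/ξ} and C(n, p) is the binomial coefficient. -/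
/-!
Since `C(n, p) ≤ 2 ^ n`, every summand of `S_{p,n₀}` is at most `qⁿ` with
`q := 2 e^{-1/ξ} = e^{-κ} < 1`, so `S_{p,n₀} ≤ q^{n₀} / (1 - q)` uniformly in `p`.
With `m = r - 1`, the `m` terms of the finite sum and the geometric tail over the diagonal
together give at most `(m + 1) q^m / (1 - q)²`, and `q^m = e^κ e^{-κ r} ≤ e^κ e^{-k r}`.
-/

open Real

/-- `S_{p,n₀} := ∑_{n=n₀}^∞ C(n,p) e^{-n/ξ}`. -/
noncomputable def Spn (ξ : ℝ) (p n₀ : ℕ) : ℝ :=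
  ∑' n : {n : ℕ // n₀ ≤ n}, (n.1.choose p : ℝ) * Real.exp (-(n.1 : ℝ) / ξ)

def natAddEquivLE (n₀ : ℕ) : ℕ ≃ {n : ℕ // n₀ ≤ n} where
  toFun k := ⟨n₀ + k, Nat.le_add_right _ _⟩
  invFun n := n.1 - n₀
  left_inv k := by simp
  right_inv n := Subtype.ext (Nat.add_sub_cancel' n.2)

lemma hasSum_geometric_subtype_le {q : ℝ} (h0 : 0 ≤ q) (h1 : q < 1) (n₀ : ℕ) :
    HasSum (fun n : {n : ℕ // n₀ ≤ n} => q ^ n.1) (q ^ n₀ / (1 - q)) := by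
  rw [← (natAddEquivLE n₀).hasSum_iff, div_eq_mul_inv]
  have h := (hasSum_geometric_of_lt_one h0 h1).mul_left (q ^ n₀)
  simp only [← pow_add] at h
  exact h

lemma tsum_le_of_nonneg_of_le_of_hasSum {ι : Type*} {f g : ι → ℝ} {a : ℝ}
    (hf : ∀ i, 0 ≤ f i) (hfg : ∀ i, f i ≤ g i) (hg : HasSum g a) : ∑' i, f i ≤ a :=
  hasSum_le hfg (hg.summable.of_nonneg_of_le hf hfg).hasSum hg

section Spn

variable {ξ : ℝ}

lemma choose_mul_exp_neg_div_le (p n : ℕ) :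
    (n.choose p : ℝ) * exp (-n / ξ) ≤ exp (-(1 / ξ - log 2)) ^ n := by
  have hsplit : exp (-(1 / ξ - log 2)) ^ n = 2 ^ n * exp (-n / ξ) := by
    rw [← exp_nat_mul, ← exp_log (two_pos : (0 : ℝ) < 2), ← exp_nat_mul, ← exp_add,
      exp_log two_pos]
    ring_nf
  rw [hsplit]
  gcongr
  exact_mod_cast Nat.choose_le_two_pow n p

lemma Spn_nonneg (p n₀ : ℕ) : 0 ≤ Spn ξ p n₀ :=
  tsum_nonneg fun _ => by positivity

lemma Spn_le (hκ : 0 < 1 / ξ - log 2) (p n₀ : ℕ) :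
    Spn ξ p n₀ ≤ exp (-(1 / ξ - log 2)) ^ n₀ / (1 - exp (-(1 / ξ - log 2))) :=
  tsum_le_of_nonneg_of_le_of_hasSum (fun _ => by positivity)
    (fun n => choose_mul_exp_neg_div_le p n.1)
    (hasSum_geometric_subtype_le (exp_pos _).le (exp_lt_one_iff.mpr (by linarith)) n₀)

lemma sum_Spn_add_tsum_Spn_diag_le (hκ : 0 < 1 / ξ - log 2) (m : ℕ) :
    (∑ p ∈ Finset.range m, Spn ξ p m) + (∑' p : {p : ℕ // m ≤ p}, Spn ξ p.1 p.1) ≤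
      (m + 1) * exp (-(1 / ξ - log 2)) ^ m / (1 - exp (-(1 / ξ - log 2))) ^ 2 := by
  set q := exp (-(1 / ξ - log 2))
  have hq0 : 0 ≤ q := (exp_pos _).le
  have hq1 : q < 1 := exp_lt_one_iff.mpr (by linarith)
  have hfinite : (∑ p ∈ Finset.range m, Spn ξ p m) ≤ m * (q ^ m / (1 - q)) := by
    have := Finset.sum_le_sum fun p (_ : p ∈ Finset.range m) => Spn_le hκ p m
    rwa [Finset.sum_const, Finset.card_range, nsmul_eq_mul] at this
  have htail : (∑' p : {p : ℕ // m ≤ p}, Spn ξ p.1 p.1) ≤ q ^ m / (1 - q) / (1 - q) :=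
    tsum_le_of_nonneg_of_le_of_hasSum (fun p => Spn_nonneg p.1 p.1) (fun p => Spn_le hκ p.1 p.1)
      ((hasSum_geometric_subtype_le hq0 hq1 m).div_const (1 - q))
  have hgeom : q ^ m / (1 - q) ≤ q ^ m / (1 - q) / (1 - q) :=
    le_div_self (by positivity) (by linarith) (by linarith)
  calc _ ≤ m * (q ^ m / (1 - q) / (1 - q)) + q ^ m / (1 - q) / (1 - q) :=
        add_le_add (hfinite.trans (by gcongr)) htail
    _ = _ := by rw [div_div, ← sq]; ring

end Spn

/-- For `0 < ξ < 1/log 2`, with `κ := 1/ξ - log 2`, `a := log(e^{1/ξ} - 1)`, and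
`k := min(κ, a)`, there is a constant `C > 0` depending only on `ξ` such that for every
`r ≥ 2`, `∑_{p=0}^{r-2} S_{p,r-1} + ∑_{p=r-1}^∞ S_{p,p} ≤ C r e^{-k r}`. -/
theorem truncated_coupling_bound (ξ : ℝ) (hξ0 : 0 < ξ) (hξ : ξ < 1 / Real.log 2) :
    ∃ C : ℝ, 0 < C ∧ ∀ r : ℕ, 2 ≤ r →
      (∑ p ∈ Finset.range (r - 1), Spn ξ p (r - 1)) +
          (∑' p : {p : ℕ // r - 1 ≤ p}, Spn ξ p.1 p.1) ≤
        C * r * Real.exp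
          (-(min (1 / ξ - Real.log 2) (Real.log (Real.exp (1 / ξ) - 1))) * r) := by
  set κ := 1 / ξ - log 2
  set k := min κ (log (exp (1 / ξ) - 1))
  have hκ : 0 < κ := by
    have := (lt_div_iff₀ (log_pos one_lt_two)).mp hξ
    rw [sub_pos, lt_div_iff₀ hξ0]
    linarith
  have hq1 : exp (-κ) < 1 := exp_lt_one_iff.mpr (by linarith)
  refine ⟨exp κ / (1 - exp (-κ)) ^ 2, by have := sub_pos.mpr hq1; positivity, ?_⟩
  rintro r hr
  obtain ⟨m, rfl⟩ : ∃ m, r = m + 1 := ⟨r - 1, by omega⟩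
  have hdecay : exp (-κ) ^ m ≤ exp κ * exp (-k * (m + 1)) := by
    rw [← exp_nat_mul, ← exp_add]
    have : k * (m + 1) ≤ κ * (m + 1) := by gcongr; exact min_le_left _ _
    exact exp_le_exp.mpr (by linarith)
  rw [Nat.add_sub_cancel]
  calc _ ≤ (m + 1) * exp (-κ) ^ m / (1 - exp (-κ)) ^ 2 := sum_Spn_add_tsum_Spn_diag_le hκ m
    _ ≤ (m + 1) * (exp κ * exp (-k * (m + 1))) / (1 - exp (-κ)) ^ 2 := by gcongr
    _ = _ := by push_cast; ring
end
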